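/- Energy estimate (Agmon estimate): Let u solve -u'' + h^{-2} V_eff u = 0 on Ω = [x₋, x₊] with u(x₋) = u(x₊) = 0, where V_eff = V^{h,κ}_eff is continuous. Let φ be a Lipschitz function with |φ'|² ≤ max(V^{h,E}_eff, 0)(1-ε)² and φ ≤ a on Ω⁻_ε = {V^{h,E}_eff ≤ ε} ∩ Ω, and suppose on Ω⁺_ε = {V^{h,E}_eff > ε} ∩ Ω we have V^{h,κ}_eff - (φ')² ≥ ε²/2, while on Ω⁻_ε we have -V^{h,κ}_eff + (φ')² ≤ κ² + ε/2. Then ∫_Ω h² |d/dx(e^{φ/h} u)|² dx + (ε²/2) ∫_{Ω⁺_ε} e^{2φ/h} |u|² dx ≤ (κ² + ε/2) e^{2a/h} ‖u‖²_{L²(Ω)}. -/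

import Mathlib

open MeasureTheory

/-- Agmon energy estimate: for a Dirichlet solution `u` of
`-u'' + h⁻² V_eff^κ u = 0` and an Agmon weight `φ` satisfying the stated
pointwise bounds on the regions `Ω⁺_ε` and `Ω⁻_ε`, the weighted energy is
controlled by `(κ² + ε/2) e^{2a/h} ‖u‖²`. -/
theorem agmon_energy_estimate (xm xp h ε κ a : ℝ) (hx : xm < xp) (hh : 0 < h)
    (hε : ε ∈ Set.Ioo (0:ℝ) 1)
    (VeffK VeffE : ℝ → ℝ) (hVK : ContinuousOn VeffK (Set.Icc xm xp))
    (hVE : ContinuousOn VeffE (Set.Icc xm xp))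
    (u : ℝ → ℝ) (hu : ContDiff ℝ (⊤ : ℕ∞) u)
    (heq : ∀ x ∈ Set.Icc xm xp,
      -(deriv (deriv u) x) + h ^ (-2 : ℤ) * VeffK x * u x = 0)
    (hum : u xm = 0) (hup : u xp = 0)
    (φ : ℝ → ℝ) (hφ : ContDiff ℝ 1 φ)
    (hgrad : ∀ x ∈ Set.Icc xm xp,
      (deriv φ x) ^ 2 ≤ max (VeffE x) 0 * (1 - ε) ^ 2)
    (Ωp Ωm : Set ℝ)
    (hΩp : Ωp = {x ∈ Set.Icc xm xp | ε < VeffE x})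
    (hΩm : Ωm = {x ∈ Set.Icc xm xp | VeffE x ≤ ε})
    (hφa : ∀ x ∈ Ωm, φ x ≤ a)
    (hplus : ∀ x ∈ Ωp, ε ^ 2 / 2 ≤ VeffK x - (deriv φ x) ^ 2)
    (hminus : ∀ x ∈ Ωm, -VeffK x + (deriv φ x) ^ 2 ≤ κ ^ 2 + ε / 2) :
    (∫ x in xm..xp, h ^ 2 * (deriv (fun y => Real.exp (φ y / h) * u y) x) ^ 2)
        + ε ^ 2 / 2 * ∫ x in Ωp, Real.exp (2 * φ x / h) * (u x) ^ 2
      ≤ (κ ^ 2 + ε / 2) * Real.exp (2 * a / h) * ∫ x in xm..xp, (u x) ^ 2 := by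
  have hhne : h ≠ 0 := ne_of_gt hh
  -- differentiability facts
  have hφd : Differentiable ℝ φ := hφ.differentiable one_ne_zero
  have hφ' : Continuous (deriv φ) := hφ.continuous_deriv le_rfl
  have hu1 : ContDiff ℝ (↑(⊤:ℕ∞)) u := hu.of_le (mod_cast le_top)
  have hud : Differentiable ℝ u := hu1.differentiable (by simp)
  have hu2 : ContDiff ℝ (↑(⊤:ℕ∞)) (deriv u) := (contDiff_infty_iff_deriv.mp hu1).2
  have hu'd : Differentiable ℝ (deriv u) := hu2.differentiable (by simp)
  have hu'' : Continuous (deriv (deriv u)) := (contDiff_infty_iff_deriv.mp hu2).2.continuous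
  -- derivative of v = e^{φ/h} u
  set dv : ℝ → ℝ := fun x => Real.exp (φ x / h) * (deriv φ x / h * u x + deriv u x) with hdv
  have hvderiv : ∀ x, deriv (fun y => Real.exp (φ y / h) * u y) x = dv x := by
    intro x
    have h1 : HasDerivAt (fun y => φ y / h) (deriv φ x / h) x :=
      (hφd x).hasDerivAt.div_const h
    have h2 : HasDerivAt (fun y => Real.exp (φ y / h))
        (Real.exp (φ x / h) * (deriv φ x / h)) x := h1.exp
    have h3 := h2.mul (hud x).hasDerivAt
    rw [show (fun y => Real.exp (φ y / h) * u y) = (fun y => Real.exp (φ y / h)) * u from rfl, h3.deriv]; simp only [hdv]; ring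
  -- derivative of F = e^{2φ/h} u u'
  set F : ℝ → ℝ := fun x => Real.exp (2 * φ x / h) * (u x * deriv u x) with hF
  set dF : ℝ → ℝ := fun x => Real.exp (2 * φ x / h) *
      (2 * deriv φ x / h * (u x * deriv u x)
        + (deriv u x * deriv u x + u x * deriv (deriv u) x)) with hdF
  have hFderiv : ∀ x, HasDerivAt F (dF x) x := by
    intro x
    have g1 : HasDerivAt (fun y => 2 * φ y / h) (2 * deriv φ x / h) x := by
      have := ((hφd x).hasDerivAt.const_mul 2).div_const h
      simpa using this
    have g2 : HasDerivAt (fun y => Real.exp (2 * φ y / h))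
        (Real.exp (2 * φ x / h) * (2 * deriv φ x / h)) x := g1.exp
    have g3 : HasDerivAt (fun y => u y * deriv u y)
        (deriv u x * deriv u x + u x * deriv (deriv u) x) x :=
      (hud x).hasDerivAt.mul (hu'd x).hasDerivAt
    have := g2.mul g3
    simp only [hF, hdF]
    exact this.congr_deriv (by ring)
  have hdFcont : Continuous dF := by
    fun_prop
  have hdvcont : Continuous dv := by
    fun_prop
  -- FTC : ∫ dF = 0
  have hFTC : (∫ x in xm..xp, dF x) = 0 := by
    rw [intervalIntegral.integral_eq_sub_of_hasDerivAt (fun x _ => hFderiv x)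
      (hdFcont.intervalIntegrable _ _)]
    simp [hF, hum, hup]
  -- the weight function g
  set g : ℝ → ℝ := fun x => (VeffK x - (deriv φ x) ^ 2) * Real.exp (2 * φ x / h) * (u x) ^ 2
    with hg
  have hgcont : ContinuousOn g (Set.Icc xm xp) := by
    apply ContinuousOn.mul
    · exact ((hVK.sub (hφ'.pow 2).continuousOn).mul
        (Real.continuous_exp.comp ((continuous_const.mul hφd.continuous).div_const h)).continuousOn)
    · exact ((hud.continuous.pow 2)).continuousOn
  -- pointwise identity on Icc
  have hpoint : ∀ x ∈ Set.Icc xm xp, h ^ 2 * (dv x) ^ 2 + g x = h ^ 2 * dF x := by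
    intro x hxI
    have hVu : VeffK x * u x = h ^ 2 * deriv (deriv u) x := by
      have := heq x hxI
      have h2 : h ^ (-2 : ℤ) = (h ^ 2)⁻¹ := by
        rw [zpow_neg, zpow_two, sq]
      rw [h2] at this
      have hh2 : (h:ℝ) ^ 2 ≠ 0 := pow_ne_zero 2 hhne
      field_simp at this
      linarith
    have hE : Real.exp (φ x / h) ^ 2 = Real.exp (2 * φ x / h) := by
      rw [← Real.exp_nat_mul]; ring_nf
    simp only [hdv, hg, hdF]
    rw [← hE]
    field_simp
    linear_combination u x * hVu
  -- integrability facts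
  have hgInt : IntegrableOn g (Set.Icc xm xp) := hgcont.integrableOn_Icc
  have hdvInt : IntervalIntegrable (fun x => h ^ 2 * (dv x) ^ 2) volume xm xp :=
    (continuous_const.mul (hdvcont.pow 2)).intervalIntegrable _ _
  have hgIntv : IntervalIntegrable g volume xm xp :=
    ContinuousOn.intervalIntegrable (by rwa [Set.uIcc_of_le hx.le])
  -- the basic energy identity
  have hsum : (∫ x in xm..xp, h ^ 2 * (dv x) ^ 2) + (∫ x in xm..xp, g x) = 0 := by
    rw [← intervalIntegral.integral_add hdvInt hgIntv]
    have hEq : Set.EqOn (fun x => h ^ 2 * (dv x) ^ 2 + g x) (fun x => h ^ 2 * dF x)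
        (Set.uIcc xm xp) := by
      intro x hx'
      rw [Set.uIcc_of_le hx.le] at hx'
      exact hpoint x hx'
    rw [intervalIntegral.integral_congr hEq, intervalIntegral.integral_const_mul, hFTC, mul_zero]
  -- measurability of the splitting
  obtain ⟨U, hUopen, hUeq⟩ := (continuousOn_iff'.mp hVE) (Set.Ioi ε) isOpen_Ioi
  have hΩpU : Ωp = U ∩ Set.Icc xm xp := by
    rw [hΩp, ← hUeq]
    ext x
    simp only [Set.mem_setOf_eq, Set.mem_inter_iff, Set.mem_preimage, Set.mem_Ioi]
    tauto
  have hmp : MeasurableSet Ωp := hΩpU ▸ (hUopen.measurableSet.inter measurableSet_Icc)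
  have hΩmeq : Ωm = Set.Icc xm xp \ Ωp := by
    rw [hΩm, hΩp]
    ext x
    simp only [Set.mem_setOf_eq, Set.mem_diff, not_and, not_lt]
    constructor
    · rintro ⟨hxI, hle⟩; exact ⟨hxI, fun _ => hle⟩
    · rintro ⟨hxI, himp⟩; exact ⟨hxI, himp hxI⟩
  have hmm : MeasurableSet Ωm := hΩmeq ▸ (measurableSet_Icc.diff hmp)
  have hdisj : Disjoint Ωp Ωm := hΩmeq ▸ Set.disjoint_sdiff_right
  have hΩpsub : Ωp ⊆ Set.Icc xm xp := by rw [hΩp]; exact Set.sep_subset _ _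
  have hunion : Ωp ∪ Ωm = Set.Icc xm xp := by
    rw [hΩmeq]; exact Set.union_diff_cancel hΩpsub
  have hΩmsub : Ωm ⊆ Set.Icc xm xp := by rw [hΩmeq]; exact Set.diff_subset
  have hsplit : ∀ f : ℝ → ℝ, IntegrableOn f (Set.Icc xm xp) →
      (∫ x in Set.Icc xm xp, f x) = (∫ x in Ωp, f x) + (∫ x in Ωm, f x) := by
    intro f hf
    rw [← hunion]
    exact setIntegral_union hdisj hmm (hf.mono_set hΩpsub) (hf.mono_set hΩmsub)
  have hIccEq : ∀ f : ℝ → ℝ, (∫ x in xm..xp, f x) = ∫ x in Set.Icc xm xp, f x := by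
    intro f
    rw [intervalIntegral.integral_of_le hx.le, ← integral_Icc_eq_integral_Ioc]
  -- identity in terms of set integrals
  have hA : (∫ x in xm..xp, h ^ 2 * (dv x) ^ 2)
      = -((∫ x in Ωp, g x) + (∫ x in Ωm, g x)) := by
    rw [hIccEq g, hsplit g hgInt] at hsum
    linarith
  -- auxiliary integrabilities
  have hEu2cont : Continuous (fun x => Real.exp (2 * φ x / h) * (u x) ^ 2) := by fun_prop
  have hEu2Int : IntegrableOn (fun x => Real.exp (2 * φ x / h) * (u x) ^ 2)
      (Set.Icc xm xp) := hEu2cont.continuousOn.integrableOn_Icc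
  have hu2Int : IntegrableOn (fun x => (u x) ^ 2) (Set.Icc xm xp) :=
    ((hud.continuous.pow 2)).continuousOn.integrableOn_Icc
  have hκε : (0:ℝ) ≤ κ ^ 2 + ε / 2 := by nlinarith [sq_nonneg κ, hε.1]
  -- bound on Ω⁺
  have hBp : ε ^ 2 / 2 * (∫ x in Ωp, Real.exp (2 * φ x / h) * (u x) ^ 2)
      ≤ ∫ x in Ωp, g x := by
    rw [← MeasureTheory.integral_const_mul]
    apply setIntegral_mono_on ((hEu2Int.mono_set hΩpsub).const_mul _)
      (hgInt.mono_set hΩpsub) hmp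
    intro x hxm
    have h1 := hplus x hxm
    have h2 : (0:ℝ) ≤ Real.exp (2 * φ x / h) * (u x) ^ 2 :=
      mul_nonneg (Real.exp_pos _).le (sq_nonneg _)
    simp only [hg]
    nlinarith [h1, h2]
  -- bound on Ω⁻
  have hBm : -(∫ x in Ωm, g x)
      ≤ (κ ^ 2 + ε / 2) * Real.exp (2 * a / h) * ∫ x in Ωm, (u x) ^ 2 := by
    rw [← MeasureTheory.integral_const_mul, ← MeasureTheory.integral_neg]
    apply setIntegral_mono_on ((hgInt.mono_set hΩmsub).neg)
      (((hu2Int.mono_set hΩmsub)).const_mul _) hmm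
    intro x hxm
    have h1 := hminus x hxm
    have h2 : Real.exp (2 * φ x / h) ≤ Real.exp (2 * a / h) := by
      apply Real.exp_le_exp.mpr
      have hxa := hφa x hxm
      gcongr
    simp only [Pi.neg_apply, hg]
    nlinarith [h1, h2, sq_nonneg (u x), (Real.exp_pos (2 * φ x / h)).le, hκε,
      mul_nonneg (mul_nonneg hκε (sub_nonneg.mpr h2)) (sq_nonneg (u x)),
      mul_nonneg (mul_nonneg (by linarith : (0:ℝ) ≤ κ ^ 2 + ε / 2 - (-VeffK x + deriv φ x ^ 2))
        (Real.exp_pos (2 * φ x / h)).le) (sq_nonneg (u x))]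
  -- nonnegativity of the Ω⁺ part of ‖u‖²
  have hup2 : (0:ℝ) ≤ ∫ x in Ωp, (u x) ^ 2 :=
    setIntegral_nonneg hmp (fun x _ => sq_nonneg _)
  -- rewrite the goal
  have hgoal1 : (∫ x in xm..xp, h ^ 2 * (deriv (fun y => Real.exp (φ y / h) * u y) x) ^ 2)
      = ∫ x in xm..xp, h ^ 2 * (dv x) ^ 2 :=
    intervalIntegral.integral_congr (fun x _ => by rw [hvderiv x])
  have hu2split : (∫ x in xm..xp, (u x) ^ 2)
      = (∫ x in Ωp, (u x) ^ 2) + (∫ x in Ωm, (u x) ^ 2) := by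
    rw [hIccEq (fun x => (u x) ^ 2), hsplit _ hu2Int]
  rw [hgoal1, hA, hu2split]
  have hC : (0:ℝ) ≤ (κ ^ 2 + ε / 2) * Real.exp (2 * a / h) :=
    mul_nonneg hκε (Real.exp_pos _).le
  have hfin : (κ ^ 2 + ε / 2) * Real.exp (2 * a / h)
      * ((∫ x in Ωp, (u x) ^ 2) + (∫ x in Ωm, (u x) ^ 2))
      = (κ ^ 2 + ε / 2) * Real.exp (2 * a / h) * (∫ x in Ωp, (u x) ^ 2)
        + (κ ^ 2 + ε / 2) * Real.exp (2 * a / h) * (∫ x in Ωm, (u x) ^ 2) := by ring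
  rw [hfin]
  nlinarith [hBp, hBm, mul_nonneg hC hup2]
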